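/- arXiv:2511.00031 — 6 statements merged into one kernel-verified Lean document; each statement's English description precedes it below -/
import Mathlib

section
/- For the uniform distribution on [1,9] with acceptance margin 1, the report r = 8 uniquely maximizes r·P(|r - X| ≤ 1) over r ≥ 0. -/
/-- Manager's expected payoff from report `r` when `X ~ U[1,9]` and the
acceptance margin is `1`: `r · P(|r - X| ≤ 1)`. -/
noncomputable def payoffU19 (r : ℝ) : ℝ :=
  r * (max 0 (min (r + 1) 9 - max (r - 1) 1)) / 8

/-- For the uniform distribution on [1,9] with acceptance margin 1, the report
`r = 8` uniquely maximizes `r · P(|r - X| ≤ 1)` over `r ≥ 0`. -/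
theorem stmt0 : ∀ r : ℝ, 0 ≤ r → r ≠ 8 → payoffU19 r < payoffU19 8 := by
  intro r hr hne
  have h8 : payoffU19 8 = 2 := by unfold payoffU19; norm_num
  rw [h8]; unfold payoffU19
  rcases le_or_gt r 2 with h2 | h2
  · rw [max_eq_right (by linarith : r - 1 ≤ 1), min_eq_left (by linarith : r + 1 ≤ 9),
      max_eq_right (by linarith : (0:ℝ) ≤ r + 1 - 1)]
    nlinarith
  rcases le_or_gt r 8 with h8' | h8'
  · have hlt : r < 8 := lt_of_le_of_ne h8' hne
    rw [max_eq_left (by linarith : (1:ℝ) ≤ r - 1), min_eq_left (by linarith : r + 1 ≤ 9)]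
    have : r + 1 - (r - 1) = 2 := by ring
    rw [this, max_eq_right (by norm_num : (0:ℝ) ≤ 2)]
    linarith
  rcases le_or_gt r 10 with h10 | h10
  · rw [max_eq_left (by linarith : (1:ℝ) ≤ r - 1), min_eq_right (by linarith : (9:ℝ) ≤ r + 1),
      max_eq_right (by linarith : (0:ℝ) ≤ 9 - (r - 1))]
    nlinarith
  · rw [max_eq_left (by linarith : (1:ℝ) ≤ r - 1), min_eq_right (by linarith : (9:ℝ) ≤ r + 1),
      max_eq_left (by linarith : 9 - (r - 1) ≤ 0)]
    norm_num
end

section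
/- For X uniform on [a,b] with b - a ≤ 2π^R and b > -π^R, the manager's optimal report is r* = (b+π^R)/2 if a < (b-π^R)/2, and r* = a + π^R otherwise; in the first case the acceptance probability is (b+π^R)/(2(b-a)), and in the second it is 1. -/
/-- Acceptance probability `A(r) = P(|r - X| ≤ π)` for `X ~ U[a,b]`. -/
noncomputable def accProb (a b π r : ℝ) : ℝ :=
  max 0 (min (r + π) b - max (r - π) a) / (b - a)

lemma key1 (a b π r : ℝ) (hπ : 0 < π) (ha : 0 ≤ a) (hab : a < b) (hr : 0 ≤ r) :
    r * max 0 (min (r + π) b - max (r - π) a) ≤ (b + π) ^ 2 / 4 := by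
  rcases le_total (min (r + π) b - max (r - π) a) 0 with h | h
  · rw [max_eq_left h]; nlinarith
  · rw [max_eq_right h]
    have h1 : min (r + π) b ≤ b := min_le_right _ _
    have h2 : r - π ≤ max (r - π) a := le_max_left _ _
    nlinarith [sq_nonneg (r - (b + π) / 2)]

lemma key2 (a b π r : ℝ) (hπ : 0 < π) (ha : 0 ≤ a) (hab : a < b) (hr : 0 ≤ r)
    (hc : (b - π) / 2 ≤ a) :
    r * max 0 (min (r + π) b - max (r - π) a) ≤ (a + π) * (b - a) := by
  rcases le_total (min (r + π) b - max (r - π) a) 0 with h | h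
  · rw [max_eq_left h]; nlinarith
  · rw [max_eq_right h]
    have h1 : min (r + π) b ≤ b := min_le_right _ _
    have h2 : r - π ≤ max (r - π) a := le_max_left _ _
    have h3 : a ≤ max (r - π) a := le_max_right _ _
    rcases le_total r (a + π) with hr2 | hr2
    · nlinarith
    · nlinarith [mul_nonneg (sub_nonneg.2 hr2) (by nlinarith : (0:ℝ) ≤ r - (b - a))]

/-- For `X` uniform on `[a,b]` with `b - a ≤ 2π^R` (and `b > -π^R`, here implied
by `a ≥ 0 < b`): the manager's optimal report maximizing `r·A(r)` over `r ≥ 0`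
is `(b+π^R)/2` if `a < (b-π^R)/2` (with acceptance probability
`(b+π^R)/(2(b-a))`), and `a + π^R` otherwise (with acceptance probability `1`). -/
theorem stmt2 (a b π : ℝ) (hπ : 0 < π) (ha : 0 ≤ a) (hab : a < b)
    (hlen : b - a ≤ 2 * π) :
    (a < (b - π) / 2 →
      (∀ r : ℝ, 0 ≤ r →
        r * accProb a b π r ≤ ((b + π) / 2) * accProb a b π ((b + π) / 2)) ∧
      accProb a b π ((b + π) / 2) = (b + π) / (2 * (b - a))) ∧
    ((b - π) / 2 ≤ a →
      (∀ r : ℝ, 0 ≤ r →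
        r * accProb a b π r ≤ (a + π) * accProb a b π (a + π)) ∧
      accProb a b π (a + π) = 1) := by
  have hba : (0:ℝ) < b - a := sub_pos.2 hab
  constructor
  · intro hc
    have hmin : min ((b + π) / 2 + π) b = b := min_eq_right (by nlinarith)
    have hmax : max ((b + π) / 2 - π) a = (b + π) / 2 - π :=
      max_eq_left (by nlinarith)
    have hA : accProb a b π ((b + π) / 2) = (b + π) / (2 * (b - a)) := by
      unfold accProb
      rw [hmin, hmax, max_eq_right (by nlinarith)]
      field_simp
      ring
    refine ⟨fun r hr => ?_, hA⟩
    rw [hA]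
    unfold accProb
    rw [mul_div_assoc']
    have : (b + π) / 2 * ((b + π) / (2 * (b - a))) = ((b + π) ^ 2 / 4) / (b - a) := by
      field_simp; ring
    rw [this]
    gcongr
    exact key1 a b π r hπ ha hab hr
  · intro hc
    have hmin : min (a + π + π) b = b := min_eq_right (by nlinarith)
    have hmax : max (a + π - π) a = a := by rw [max_eq_right (by nlinarith)]
    have hA : accProb a b π (a + π) = 1 := by
      unfold accProb
      rw [hmin, hmax, max_eq_right (by positivity), div_self (ne_of_gt hba)]
    refine ⟨fun r hr => ?_, hA⟩
    rw [hA, mul_one]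
    unfold accProb
    rw [mul_div_assoc']
    rw [div_le_iff₀ hba]
    have := key2 a b π r hπ ha hab hr hc
    nlinarith
end

section
/- Let f be a continuously differentiable log-concave density with CDF F. For fixed b in the support, the map a ↦ (F(b) - F(a))/f(a) is strictly decreasing on {a < b : f(a) > 0}. -/
open MeasureTheory Set intervalIntegral

/-- Let `f` be a continuously differentiable log-concave density (positive on a
convex support `S`) with CDF `F`. For fixed `b` in the support, the map
`a ↦ (F b - F a)/f a` is strictly decreasing on `{a ∈ S : a < b}`. -/
theorem stmt4 (f F : ℝ → ℝ) (S : Set ℝ) (hS : Convex ℝ S)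
    (hf : ContDiff ℝ 1 f) (hf0 : ∀ x, 0 ≤ f x) (hfS : ∀ x ∈ S, 0 < f x)
    (hint : MeasureTheory.Integrable f) (hnorm : ∫ x, f x = 1)
    (hlc : ConcaveOn ℝ S (fun x => Real.log (f x)))
    (hF : ∀ x, F x = ∫ t in Set.Iic x, f t)
    (b : ℝ) (hb : b ∈ S) :
    ∀ a₁ ∈ S, ∀ a₂ ∈ S, a₁ < a₂ → a₂ < b →
      (F b - F a₂) / f a₂ < (F b - F a₁) / f a₁ := by
  intro a₁ ha₁ a₂ ha₂ h12 h2b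
  have hcont : Continuous f := hf.continuous
  have hIcc : Set.Icc a₁ b ⊆ S := hS.ordConnected.out ha₁ hb
  have hf1 : 0 < f a₁ := hfS a₁ ha₁
  have hf2 : 0 < f a₂ := hfS a₂ ha₂
  -- F b - F a = ∫ t in a..b, f t
  have hFab : ∀ a, F b - F a = ∫ t in a..b, f t := by
    intro a
    rw [hF, hF]
    exact integral_Iic_sub_Iic (hint.integrableOn) (hint.integrableOn)
  -- change of variables: (F b - F a)/ f a = ∫ u in 0..(b-a), f (a+u) / f a
  have hrw : ∀ a, (F b - F a) / f a = ∫ u in (0:ℝ)..(b - a), f (a + u) / f a := by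
    intro a
    rw [hFab, intervalIntegral.integral_div, intervalIntegral.integral_comp_add_left f a]
    norm_num
  rw [hrw a₁, hrw a₂]
  -- key log-concavity inequality
  have key : ∀ u, 0 ≤ u → a₂ + u ≤ b → f (a₂ + u) * f a₁ ≤ f (a₁ + u) * f a₂ := by
    intro u hu hub
    have h1u : a₁ + u ∈ S := hIcc ⟨by linarith, by linarith⟩
    have h2u : a₂ + u ∈ S := hIcc ⟨by linarith, by linarith⟩
    have hf1u : 0 < f (a₁ + u) := hfS _ h1u
    have hf2u : 0 < f (a₂ + u) := hfS _ h2u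
    rcases eq_or_lt_of_le hu with rfl | hu'
    · simp [mul_comm]
    · have hden : 0 < a₂ + u - a₁ := by linarith
      set lam : ℝ := u / (a₂ + u - a₁) with hlam
      have hl0 : 0 ≤ lam := by positivity
      have hlmul : lam * (a₂ + u - a₁) = u := div_mul_cancel₀ _ hden.ne'
      have hl1 : lam ≤ 1 := by
        rw [hlam, div_le_one hden]; linarith
      have c1 := hlc.2 ha₁ h2u hl0 (by linarith : (0:ℝ) ≤ 1 - lam) (by ring)
      have c2 := hlc.2 ha₁ h2u (by linarith : (0:ℝ) ≤ 1 - lam) hl0 (by ring)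
      have e1 : lam • a₁ + (1 - lam) • (a₂ + u) = a₂ := by
        simp only [smul_eq_mul]; nlinarith [hlmul]
      have e2 : (1 - lam) • a₁ + lam • (a₂ + u) = a₁ + u := by
        simp only [smul_eq_mul]; nlinarith [hlmul]
      rw [e1] at c1
      rw [e2] at c2
      have hsum : Real.log (f a₁) + Real.log (f (a₂ + u)) ≤
          Real.log (f a₂) + Real.log (f (a₁ + u)) := by
        simp only [smul_eq_mul] at c1 c2
        nlinarith [c1, c2]
      have hlog : Real.log (f (a₂ + u) * f a₁) ≤ Real.log (f (a₁ + u) * f a₂) := by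
        rw [Real.log_mul hf2u.ne' hf1.ne', Real.log_mul hf1u.ne' hf2.ne']
        linarith
      exact (Real.log_le_log_iff (by positivity) (by positivity)).mp hlog
  -- integrability facts
  have hii : ∀ (a c d : ℝ), IntervalIntegrable (fun u => f (a + u) / f a) volume c d := by
    intro a c d
    exact (Continuous.div_const (hcont.comp (continuous_const.add continuous_id)) _).intervalIntegrable c d
  -- monotone part
  have hmono : (∫ u in (0:ℝ)..(b - a₂), f (a₂ + u) / f a₂)
      ≤ ∫ u in (0:ℝ)..(b - a₂), f (a₁ + u) / f a₁ := by
    apply intervalIntegral.integral_mono_on (by linarith) (hii a₂ 0 (b - a₂)) (hii a₁ 0 (b - a₂))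
    intro u hu
    rw [div_le_div_iff₀ hf2 hf1]
    exact key u hu.1 (by linarith [hu.2])
  -- strict extra part
  have hsplit : (∫ u in (0:ℝ)..(b - a₁), f (a₁ + u) / f a₁)
      = (∫ u in (0:ℝ)..(b - a₂), f (a₁ + u) / f a₁)
        + ∫ u in (b - a₂)..(b - a₁), f (a₁ + u) / f a₁ :=
    (intervalIntegral.integral_add_adjacent_intervals (hii a₁ 0 (b - a₂)) (hii a₁ (b - a₂) (b - a₁))).symm
  have hpos : 0 < ∫ u in (b - a₂)..(b - a₁), f (a₁ + u) / f a₁ := by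
    apply intervalIntegral_pos_of_pos_on (hii a₁ (b - a₂) (b - a₁))
    · intro u hu
      have : a₁ + u ∈ S := hIcc ⟨by linarith [hu.1, h2b.le], by linarith [hu.2]⟩
      exact div_pos (hfS _ this) hf1
    · linarith
  calc (∫ u in (0:ℝ)..(b - a₂), f (a₂ + u) / f a₂)
      ≤ ∫ u in (0:ℝ)..(b - a₂), f (a₁ + u) / f a₁ := hmono
    _ < ∫ u in (0:ℝ)..(b - a₁), f (a₁ + u) / f a₁ := by rw [hsplit]; linarith
end

section
/- Let f be a log-concave density with CDF F and let Γ_G(b) denote the unique solution a of a + π^R = (F(b) - F(a))/f(a) for a < b. Then the derivative of Γ_G with respect to b is strictly less than 1; equivalently, b ↦ Γ_G(b) - (b - 2π^R) is strictly decreasing. -/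
/-!
Suppose `Γ b₂ - Γ b₁ = s ≥ b₂ - b₁ > 0`. Shifting by `s` maps `[Γ b₁, b₂ - s] ⊆ [Γ b₁, b₁]` onto
`[Γ b₂, b₂]`, and log-concavity makes `t ↦ f (t + s) / f t` nonincreasing, so
`∫_{Γ b₂}^{b₂} f / f (Γ b₂) ≤ ∫_{Γ b₁}^{b₁} f / f (Γ b₁)`. By the defining equation these ratios
are `Γ b₂ + π` and `Γ b₁ + π`, contradicting `Γ b₁ < Γ b₂`.
-/

open MeasureTheory

theorem ConcaveOn.increment_le_increment {S : Set ℝ} {g : ℝ → ℝ} (hg : ConcaveOn ℝ S g)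
    {x y s : ℝ} (hx : x ∈ S) (hys : y + s ∈ S) (hxy : x ≤ y) (hs : 0 ≤ s) :
    g (y + s) - g y ≤ g (x + s) - g x := by
  rcases hxy.eq_or_lt with rfl | hxy
  · rfl
  rcases hs.eq_or_lt with rfl | hs
  · simp
  have hD : 0 < y + s - x := by linarith
  have hsum : (y - x) / (y + s - x) + s / (y + s - x) = 1 := by field_simp; ring
  have h₁ := hg.2 hx hys (by positivity) (by positivity) hsum
  have h₂ := hg.2 hx hys (by positivity) (by positivity) ((add_comm _ _).trans hsum)
  have e₁ : ((y - x) / (y + s - x)) • x + (s / (y + s - x)) • (y + s) = x + s := by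
    simp only [smul_eq_mul]; field_simp; ring
  have e₂ : (s / (y + s - x)) • x + ((y - x) / (y + s - x)) • (y + s) = y := by
    simp only [smul_eq_mul]; field_simp; ring
  rw [e₁] at h₁
  rw [e₂] at h₂
  simp only [smul_eq_mul] at h₁ h₂
  linear_combination h₁ + h₂ - (g x + g (y + s)) * hsum

section LogConcave

variable {f : ℝ → ℝ} {S : Set ℝ}

theorem mul_le_mul_shift_of_concaveOn_log (hpos : ∀ x ∈ S, 0 < f x)
    (hlc : ConcaveOn ℝ S (fun x => Real.log (f x))) {x y s : ℝ} (hx : x ∈ S) (hys : y + s ∈ S)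
    (hxy : x ≤ y) (hs : 0 ≤ s) :
    f (y + s) * f x ≤ f y * f (x + s) := by
  have hmem : Set.Icc x (y + s) ⊆ S := hlc.1.ordConnected.out hx hys
  have hy := hpos y (hmem ⟨hxy, by linarith⟩)
  have hxs := hpos (x + s) (hmem ⟨by linarith, by linarith⟩)
  have hx' := hpos x hx
  have hys' := hpos (y + s) hys
  rw [← Real.log_le_log_iff (by positivity) (by positivity), Real.log_mul hys'.ne' hx'.ne',
    Real.log_mul hy.ne' hxs.ne']
  linarith [hlc.increment_le_increment hx hys hxy hs]

theorem integral_shift_mul_le_of_concaveOn_log (hpos : ∀ x ∈ S, 0 < f x)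
    (hlc : ConcaveOn ℝ S (fun x => Real.log (f x))) (hfi : Integrable f) {a b s : ℝ}
    (ha : a ∈ S) (hbs : b + s ∈ S) (hab : a ≤ b) (hs : 0 ≤ s) :
    (∫ t in (a + s)..(b + s), f t) * f a ≤ f (a + s) * ∫ t in a..b, f t := by
  rw [← intervalIntegral.integral_comp_add_right, ← intervalIntegral.integral_mul_const,
    ← intervalIntegral.integral_const_mul]
  refine intervalIntegral.integral_mono_on hab ((hfi.comp_add_right s).intervalIntegrable.mul_const _)
    (hfi.intervalIntegrable.const_mul _) fun t ht => ?_
  have hts : t + s ∈ S := hlc.1.ordConnected.out ha hbs ⟨by linarith [ht.1], by linarith [ht.2]⟩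
  rw [mul_comm (f (a + s))]
  exact mul_le_mul_shift_of_concaveOn_log hpos hlc ha hts ht.1 hs

theorem integral_mul_le_of_concaveOn_log (hpos : ∀ x ∈ S, 0 < f x)
    (hlc : ConcaveOn ℝ S (fun x => Real.log (f x))) (hfi : Integrable f) {a₁ b₁ a₂ b₂ : ℝ}
    (ha₁ : a₁ ∈ S) (hb₁ : b₁ ∈ S) (hb₂ : b₂ ∈ S) (ha : a₁ ≤ a₂) (hab₂ : a₂ ≤ b₂)
    (hlen : b₂ - a₂ ≤ b₁ - a₁) :
    (∫ t in a₂..b₂, f t) * f a₁ ≤ f a₂ * ∫ t in a₁..b₁, f t := by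
  have hshift := integral_shift_mul_le_of_concaveOn_log hpos hlc hfi (b := b₂ - (a₂ - a₁)) ha₁
    (by rwa [sub_add_cancel]) (by linarith) (sub_nonneg.2 ha)
  rw [add_sub_cancel, sub_add_cancel] at hshift
  have hnonneg : 0 ≤ᵐ[volume.restrict (Set.Ioc a₁ b₁)] f :=
    ae_restrict_of_forall_mem measurableSet_Ioc fun t ht =>
      (hpos t (hlc.1.ordConnected.out ha₁ hb₁ (Set.Ioc_subset_Icc_self ht))).le
  calc (∫ t in a₂..b₂, f t) * f a₁ ≤ f a₂ * ∫ t in a₁..(b₂ - (a₂ - a₁)), f t := hshift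
    _ ≤ f a₂ * ∫ t in a₁..b₁, f t := by
      refine mul_le_mul_of_nonneg_left (intervalIntegral.integral_mono_interval le_rfl
        (by linarith) (by linarith) hnonneg hfi.intervalIntegrable) (hpos a₂ ?_).le
      exact hlc.1.ordConnected.out ha₁ hb₂ ⟨ha, hab₂⟩

end LogConcave

theorem stmt5_general (f F : ℝ → ℝ) (S : Set ℝ)
    (hpos : ∀ x ∈ S, 0 < f x)
    (hint : MeasureTheory.Integrable f)
    (hlc : ConcaveOn ℝ S (fun x => Real.log (f x)))
    (hF : ∀ x, F x = ∫ t in Set.Iic x, f t)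
    (π : ℝ) (Γ : ℝ → ℝ)
    (hΓ : ∀ b ∈ S, -π < b →
      Γ b ∈ S ∧ Γ b < b ∧ Γ b + π = (F b - F (Γ b)) / f (Γ b)) :
    ∀ b₁ ∈ S, ∀ b₂ ∈ S, -π < b₁ → b₁ < b₂ →
      Γ b₂ - (b₂ - 2 * π) < Γ b₁ - (b₁ - 2 * π) := by
  intro b₁ hb₁ b₂ hb₂ hb₁π hb
  obtain ⟨ha₁, -, hΓ₁⟩ := hΓ b₁ hb₁ hb₁π
  obtain ⟨ha₂, hab₂, hΓ₂⟩ := hΓ b₂ hb₂ (hb₁π.trans hb)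
  have hmass : ∀ a b, F b - F a = ∫ t in a..b, f t := fun a b => by
    rw [hF, hF, intervalIntegral.integral_Iic_sub_Iic hint.integrableOn hint.integrableOn]
  rw [hmass, eq_div_iff (hpos _ ha₁).ne'] at hΓ₁
  rw [hmass, eq_div_iff (hpos _ ha₂).ne'] at hΓ₂
  by_contra! hgap
  have key := integral_mul_le_of_concaveOn_log hpos hlc hint ha₁ hb₁ hb₂ (by linarith) hab₂.le
    (by linarith)
  rw [← hΓ₁, ← hΓ₂] at key
  have : Γ b₂ + π ≤ Γ b₁ + π :=
    le_of_mul_le_mul_right (by linarith) (mul_pos (hpos _ ha₂) (hpos _ ha₁))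
  linarith

/-- Let `f` be a strictly positive, continuously differentiable, log-concave
density on its (convex) support `S`, with CDF `F`, and let `Γ` denote the map
`b ↦ Γ_G(b)`, the unique solution `a < b` of `a + π^R = (F b - F a)/f a`.
Then `b ↦ Γ_G(b) - (b - 2π^R)` is strictly decreasing (equivalently,
`Γ_G' < 1`). -/
theorem stmt5 (f F : ℝ → ℝ) (S : Set ℝ) (hS : Convex ℝ S)
    (hf : ContDiff ℝ 1 f) (hpos : ∀ x ∈ S, 0 < f x) (hf0 : ∀ x, 0 ≤ f x)
    (hint : MeasureTheory.Integrable f) (hnorm : ∫ x, f x = 1)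
    (hlc : ConcaveOn ℝ S (fun x => Real.log (f x)))
    (hF : ∀ x, F x = ∫ t in Set.Iic x, f t)
    (π : ℝ) (hπ : 0 < π) (Γ : ℝ → ℝ)
    (hΓ : ∀ b ∈ S, -π < b →
      Γ b ∈ S ∧ Γ b < b ∧ Γ b + π = (F b - F (Γ b)) / f (Γ b)) :
    ∀ b₁ ∈ S, ∀ b₂ ∈ S, -π < b₁ → b₁ < b₂ →
      Γ b₂ - (b₂ - 2 * π) < Γ b₁ - (b₁ - 2 * π) :=
  stmt5_general f F S hpos hint hlc hF π Γ hΓ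
end

section
/- Let f be a log-concave density with CDF F. For any a < b in the support, f(b) ≤ f(a) + (F(b) - F(a))·f'(a)/f(a). -/
/-!
Concavity of `log f` makes the logarithmic derivative `f' / f` antitone, so on `[a, b]` we have
`f' ≤ (f'(a) / f(a)) · f`. Integrating this over `[a, b]` gives
`f b - f a ≤ (f'(a) / f(a)) · ∫_a^b f = (f'(a) / f(a)) · (F b - F a)`.
-/

open Set intervalIntegral

theorem ConcaveOn.antitoneOn_logDeriv {f : ℝ → ℝ} {S : Set ℝ}
    (hlc : ConcaveOn ℝ S (fun x => Real.log (f x)))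
    (hfd : ∀ x ∈ S, DifferentiableAt ℝ f x) (hne : ∀ x ∈ S, f x ≠ 0) :
    AntitoneOn (logDeriv f) S := by
  intro x hx y hy hxy
  rw [← Real.deriv_log_comp_eq_logDeriv (hfd x hx) (hne x hx),
    ← Real.deriv_log_comp_eq_logDeriv (hfd y hy) (hne y hy)]
  exact hlc.antitoneOn_deriv (fun z hz => (hfd z hz).log (hne z hz)) hx hy hxy

theorem sub_le_mul_integral_of_deriv_le_mul {f : ℝ → ℝ} {a b c : ℝ} (hab : a ≤ b)
    (hfd : ∀ x ∈ Icc a b, DifferentiableAt ℝ f x)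
    (hle : ∀ x ∈ Ioo a b, deriv f x ≤ c * f x) :
    f b - f a ≤ c * ∫ x in a..b, f x := by
  have hcont : ContinuousOn f (Icc a b) := fun x hx => (hfd x hx).continuousAt.continuousWithinAt
  rw [← intervalIntegral.integral_const_mul]
  exact sub_le_integral_of_hasDeriv_right_of_le hab hcont
    (fun x hx => (hfd x (Ioo_subset_Icc_self hx)).hasDerivAt.hasDerivWithinAt)
    (hcont.integrableOn_Icc.const_mul c) hle

theorem ConcaveOn.sub_le_logDeriv_mul_integral {f : ℝ → ℝ} {S : Set ℝ} (hS : Convex ℝ S)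
    (hlc : ConcaveOn ℝ S (fun x => Real.log (f x)))
    (hfd : ∀ x ∈ S, DifferentiableAt ℝ f x) (hpos : ∀ x ∈ S, 0 < f x)
    {a b : ℝ} (ha : a ∈ S) (hb : b ∈ S) (hab : a ≤ b) :
    f b - f a ≤ logDeriv f a * ∫ x in a..b, f x := by
  have hIcc : Icc a b ⊆ S := hS.ordConnected.out ha hb
  have hanti := hlc.antitoneOn_logDeriv hfd (fun x hx => (hpos x hx).ne')
  refine sub_le_mul_integral_of_deriv_le_mul hab (fun x hx => hfd x (hIcc hx)) fun x hx => ?_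
  have hxS := hIcc (Ioo_subset_Icc_self hx)
  calc deriv f x = logDeriv f x * f x := by
        rw [logDeriv_apply, div_mul_cancel₀ _ (hpos x hxS).ne']
    _ ≤ logDeriv f a * f x :=
        mul_le_mul_of_nonneg_right (hanti ha hxS hx.1.le) (hpos x hxS).le

theorem stmt6_general (f F : ℝ → ℝ) (S : Set ℝ) (hS : Convex ℝ S)
    (hf : ContDiff ℝ 1 f) (hpos : ∀ x ∈ S, 0 < f x)
    (hint : MeasureTheory.Integrable f)
    (hlc : ConcaveOn ℝ S (fun x => Real.log (f x)))
    (hF : ∀ x, F x = ∫ t in Set.Iic x, f t)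
    (a b : ℝ) (ha : a ∈ S) (hb : b ∈ S) (hab : a < b) :
    f b ≤ f a + (F b - F a) * deriv f a / f a := by
  have hFab : F b - F a = ∫ x in a..b, f x := by
    rw [hF a, hF b]
    exact integral_Iic_sub_Iic hint.integrableOn hint.integrableOn
  have hfd : Differentiable ℝ f := hf.differentiable one_ne_zero
  have hgrowth := hlc.sub_le_logDeriv_mul_integral hS (fun x _ => hfd x) hpos ha hb hab.le
  rw [hFab, mul_div_assoc, mul_comm, ← logDeriv_apply]
  linarith

/-- Let `f` be a continuously differentiable, strictly positive (on its open
convex support `S`) log-concave density with CDF `F`. For any `a < b` in the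
support, `f b ≤ f a + (F b - F a) · f'(a)/f a`. -/
theorem stmt6 (f F : ℝ → ℝ) (S : Set ℝ) (hS : Convex ℝ S) (hSo : IsOpen S)
    (hf : ContDiff ℝ 1 f) (hpos : ∀ x ∈ S, 0 < f x) (hf0 : ∀ x, 0 ≤ f x)
    (hint : MeasureTheory.Integrable f) (hnorm : ∫ x, f x = 1)
    (hlc : ConcaveOn ℝ S (fun x => Real.log (f x)))
    (hF : ∀ x, F x = ∫ t in Set.Iic x, f t)
    (a b : ℝ) (ha : a ∈ S) (hb : b ∈ S) (hab : a < b) :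
    f b ≤ f a + (F b - F a) * deriv f a / f a :=
  stmt6_general f F S hS hf hpos hint hlc hF a b ha hb hab
end

section
/- For X uniform on [X̲, X̄] with silence set [X̲, b] where b ≥ max(3π^R, X̲ + 2π^R), the manager's optimal silence report is r₀ = b - π^R, and the auditor's expected loss ∫_{b-2π^R}^{b} (b - π^R - x)² dx / (X̄ - X̲) + (X̄ - X̲ - 2π^R)(π^R)²/(X̄ - X̲) is constant in b; in particular equal to [2(π^R)³/3 + (X̄ - X̲ - 2π^R)(π^R)²]/(X̄ - X̲). -/
/-!
A report `r` lands within `π` of `X` with probability `|[r - π, r + π] ∩ [X̲, b]| / (b - X̲)`.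
The overlap is at most `2π`, with equality at `r = b - π`, which settles reports `r ≤ b - π`.
For `r > b - π` the overlap is at most `b + π - r`, and
`r (b + π - r) = 2π (b - π) - (r - (b - π)) (r - 2π)`, where `r > b - π ≥ 2π` because `b ≥ 3π`.
The loss integral is `∫_{-π}^{π} t² dt = 2π³/3`, whatever `b` is.
-/

/-- The length of `[r - π, r + π] ∩ [l, b]`. -/
def overlap (l b π r : ℝ) : ℝ := max 0 (min (r + π) b - max (r - π) l)

section Overlap

variable {l b π r : ℝ}

theorem overlap_nonneg : 0 ≤ overlap l b π r := le_max_left _ _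

theorem overlap_le_two_mul (hπ : 0 ≤ π) : overlap l b π r ≤ 2 * π := by
  refine max_le (by linarith) ?_
  linarith [min_le_left (r + π) b, le_max_left (r - π) l]

theorem overlap_le_max_zero_sub : overlap l b π r ≤ max 0 (b + π - r) := by
  refine max_le_max le_rfl ?_
  linarith [min_le_right (r + π) b, le_max_left (r - π) l]

theorem overlap_sub_self (hπ : 0 ≤ π) (hl : l + 2 * π ≤ b) : overlap l b π (b - π) = 2 * π := by
  have hmin : min (b - π + π) b = b := by simp
  have hmax : max (b - π - π) l = b - 2 * π := by rw [max_eq_left] <;> linarith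
  rw [overlap, hmin, hmax, max_eq_right] <;> linarith

theorem mul_overlap_le (hπ : 0 ≤ π) (hb : 3 * π ≤ b) (hr : 0 ≤ r) :
    r * overlap l b π r ≤ (b - π) * (2 * π) := by
  rcases le_or_gt r (b - π) with hle | hgt
  · exact mul_le_mul hle (overlap_le_two_mul hπ) overlap_nonneg (by linarith)
  have hcap := overlap_le_max_zero_sub (l := l) (b := b) (π := π) (r := r)
  rcases le_total (b + π - r) 0 with hneg | hpos
  · rw [max_eq_left hneg] at hcap
    nlinarith [overlap_nonneg (l := l) (b := b) (π := π) (r := r)]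
  · rw [max_eq_right hpos] at hcap
    calc r * overlap l b π r ≤ r * (b + π - r) := mul_le_mul_of_nonneg_left hcap hr
      _ = (b - π) * (2 * π) - (r - (b - π)) * (r - 2 * π) := by ring
      _ ≤ (b - π) * (2 * π) := sub_le_self _ (mul_nonneg (by linarith) (by linarith))

theorem mul_overlap_div_le (hπ : 0 ≤ π) (hb : 3 * π ≤ b) (hl : l + 2 * π ≤ b) (hr : 0 ≤ r) :
    r * (overlap l b π r / (b - l)) ≤ (b - π) * (overlap l b π (b - π) / (b - l)) := by
  rw [overlap_sub_self hπ hl, mul_div_assoc', mul_div_assoc']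
  exact div_le_div_of_nonneg_right (mul_overlap_le hπ hb hr) (by linarith)

end Overlap

theorem integral_sub_sq (a b c : ℝ) :
    ∫ x in a..b, (c - x) ^ 2 = ((c - a) ^ 3 - (c - b) ^ 3) / 3 := by
  rw [intervalIntegral.integral_comp_sub_left (fun x => x ^ 2) c, integral_pow]
  norm_num

theorem stmt8_general (Xl Xh π b : ℝ) (hπ : 0 < π)
    (hb1 : 3 * π ≤ b) (hb2 : Xl + 2 * π ≤ b) :
    (∀ r : ℝ, 0 ≤ r →
      r * (max 0 (min (r + π) b - max (r - π) Xl) / (b - Xl)) ≤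
        (b - π) * (max 0 (min ((b - π) + π) b - max ((b - π) - π) Xl) / (b - Xl))) ∧
    (∫ x in (b - 2 * π)..b, (b - π - x)^2) / (Xh - Xl)
        + (Xh - Xl - 2 * π) * π^2 / (Xh - Xl)
      = (2 * π^3 / 3 + (Xh - Xl - 2 * π) * π^2) / (Xh - Xl) :=
  ⟨fun _ hr => mul_overlap_div_le hπ.le hb1 hb2 hr, by rw [integral_sub_sq]; ring⟩

/-- For `X` uniform on `[X̲, X̄]` with silence set `[X̲, b]` where
`b ≥ max (3π^R) (X̲ + 2π^R)`: the manager's optimal silence report is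
`r₀ = b - π^R`, and the auditor's expected loss equals
`(2(π^R)³/3 + (X̄ - X̲ - 2π^R)(π^R)²)/(X̄ - X̲)`, a constant in `b`. -/
theorem stmt8 (Xl Xh π b : ℝ) (hπ : 0 < π) (hXl : 0 ≤ Xl)
    (hlen : 2 * π < Xh - Xl) (hb1 : 3 * π ≤ b) (hb2 : Xl + 2 * π ≤ b)
    (hbX : b ≤ Xh) :
    (∀ r : ℝ, 0 ≤ r →
      r * (max 0 (min (r + π) b - max (r - π) Xl) / (b - Xl)) ≤
        (b - π) * (max 0 (min ((b - π) + π) b - max ((b - π) - π) Xl) / (b - Xl))) ∧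
    (∫ x in (b - 2 * π)..b, (b - π - x)^2) / (Xh - Xl)
        + (Xh - Xl - 2 * π) * π^2 / (Xh - Xl)
      = (2 * π^3 / 3 + (Xh - Xl - 2 * π) * π^2) / (Xh - Xl) :=
  stmt8_general Xl Xh π b hπ hb1 hb2
end
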